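/- arXiv:2401.15166 — 2 statements merged into one kernel-verified Lean document; each statement's English description precedes it below -/
import Mathlib

section
/- Let γ ≥ 3 and κ ≥ 3 be integers, let p be a probability-distribution matrix with coupling polynomial f and reflected polynomial f̄, and let q be the probability mass function on (Fin (m+1)) × (Fin M) with q(i,j) = p(i,j). Let Q : (Fin γ × Fin κ) → (Fin (m+1) × Fin M) be a random function whose entries are independent and identically distributed according to q (i.e., Q is distributed according to the finite product of the measures induced by q), and write K(i,j) ∈ ℤ and F(i,j) ∈ ℤ for the integer values of the first and second components of Q(i,j). Call an ordered tuple (i₁,i₂,i₃,j₁,j₂,j₃), with i₁,i₂,i₃ ∈ Fin γ pairwise distinct and j₁,j₂,j₃ ∈ Fin κ pairwise distinct, active under Q if Σ_{k=1}^{3} (K(i_k,j_k) − K(i_k,j_{k+1})) = 0 and M ∣ Σ_{k=1}^{3} (F(i_k,j_k) − F(i_k,j_{k+1})), where j₄ = j₁. Then the expected number of active ordered tuples equals γ(γ−1)(γ−2)·κ(κ−1)(κ−2)·Σ_{b ∈ ℤ, M ∣ b} [f³ · f̄³]_{(0,b)}. (Since each cycle-6 candidate corresponds to exactly 6 ordered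 tuples, this is 6 times the paper's N₆(p) = 6·C(γ,3)·C(κ,3)·P₆(p), the expected number of cycle-6 candidates in the MD protograph.) -/
open MeasureTheory

/-- `f_a`: the Laurent polynomial `Σ_{i,j} p(i,j) X^{a·i} Y^{a·j}` in the monoid algebra
`AddMonoidAlgebra ℝ (ℤ × ℤ)`; `fpa p 1 = f` and `fpa p (-1) = f̄`. -/
noncomputable def fpa {m M : ℕ} (p : Fin (m + 1) × Fin M → ℝ) (a : ℤ) :
    AddMonoidAlgebra ℝ (ℤ × ℤ) :=
  ∑ ij : Fin (m + 1) × Fin M,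
    AddMonoidAlgebra.single (a * (ij.1 : ℤ), a * (ij.2 : ℤ)) (p ij)

/-- `Σ_{b ∈ ℤ, M ∣ b} [g]_{(0,b)}`. -/
noncomputable def divCoeffSum (M : ℕ) (g : AddMonoidAlgebra ℝ (ℤ × ℤ)) : ℝ :=
  ∑ᶠ (b : ℤ) (_ : (M : ℤ) ∣ b), g.coeff (0, b)

/-- The discrete measure on `Fin (m+1) × Fin M` induced by the probability mass
function `q(i,j) = p(i,j)`. -/
noncomputable def qMeasure {m M : ℕ} (p : Fin (m + 1) × Fin M → ℝ) :
    Measure (Fin (m + 1) × Fin M) :=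
  ∑ ij : Fin (m + 1) × Fin M, ENNReal.ofReal (p ij) • Measure.dirac ij

open Classical in
/-- The number of active ordered tuples `(i₁,i₂,i₃,j₁,j₂,j₃)` (pairwise-distinct rows and
pairwise-distinct columns) under a relocation/partitioning assignment `Q`, where
`K(i,j)` and `F(i,j)` are the integer values of the two components of `Q(i,j)` and the
tuple is active when `Σ_k (K(i_k,j_k) − K(i_k,j_{k+1})) = 0` and
`M ∣ Σ_k (F(i_k,j_k) − F(i_k,j_{k+1}))`, with `j₄ = j₁`. -/
noncomputable def activeCount (m M γ κ : ℕ)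
    (Q : Fin γ × Fin κ → Fin (m + 1) × Fin M) : ℝ :=
  ∑ i₁ : Fin γ, ∑ i₂ : Fin γ, ∑ i₃ : Fin γ, ∑ j₁ : Fin κ, ∑ j₂ : Fin κ, ∑ j₃ : Fin κ,
    if (i₁ ≠ i₂ ∧ i₁ ≠ i₃ ∧ i₂ ≠ i₃ ∧ j₁ ≠ j₂ ∧ j₁ ≠ j₃ ∧ j₂ ≠ j₃ ∧
        ((((Q (i₁, j₁)).1 : ℤ) - ((Q (i₁, j₂)).1 : ℤ)) +
         (((Q (i₂, j₂)).1 : ℤ) - ((Q (i₂, j₃)).1 : ℤ)) +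
         (((Q (i₃, j₃)).1 : ℤ) - ((Q (i₃, j₁)).1 : ℤ)) = 0) ∧
        ((M : ℤ) ∣ ((((Q (i₁, j₁)).2 : ℤ) - ((Q (i₁, j₂)).2 : ℤ)) +
         (((Q (i₂, j₂)).2 : ℤ) - ((Q (i₂, j₃)).2 : ℤ)) +
         (((Q (i₃, j₃)).2 : ℤ) - ((Q (i₃, j₁)).2 : ℤ))))) then (1 : ℝ) else 0

/-!
Expanding `f³ f̄³` over 6-tuples `v` of cells produces the monomial at `cyclePoint v`, the signed
sum of the cell exponents, with weight `∏ₖ p(v k)`; hence `Σ_{M ∣ b} [f³ f̄³]_{(0,b)}` is the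
probability that six independent `q`-distributed cells are balanced. For distinct rows and distinct
columns the six cells `(i₁,j₁), (i₂,j₂), (i₃,j₃), (i₁,j₂), (i₂,j₃), (i₃,j₁)` of the cycle are
distinct, so the entries of `Q` there are i.i.d. with law `q` and the tuple is active with exactly
that probability. Linearity of expectation and counting the tuples finish the proof.
-/

open Finset

theorem sum_boole_pairwise_ne (α : Type*) [Fintype α] [DecidableEq α] :
    ∑ a : α, ∑ b : α, ∑ c : α, (if a ≠ b ∧ a ≠ c ∧ b ≠ c then (1 : ℝ) else 0) =
      (Fintype.card α : ℝ) * ((Fintype.card α : ℝ) - 1) * ((Fintype.card α : ℝ) - 2) := by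
  have split : ∀ a b c : α, (if a ≠ b ∧ a ≠ c ∧ b ≠ c then (1 : ℝ) else 0) =
      (1 - if b = a then 1 else 0) * (1 - (if c = a then 1 else 0) - if c = b then 1 else 0) := by
    intro a b c
    by_cases hab : b = a <;> by_cases hac : c = a <;> by_cases hbc : c = b <;> simp_all [eq_comm]
  simp only [split, ← mul_sum, sum_sub_distrib, sum_ite_eq', mem_univ, if_true, sum_const,
    card_univ, nsmul_eq_mul, mul_one, ← sum_mul]
  ring

section Marginal
variable {ι κ α : Type*} [Fintype ι] [Fintype κ] [MeasurableSpace α]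
  {μ : Measure α} [IsProbabilityMeasure μ]

theorem measurePreserving_pi_comp_of_injective {c : κ → ι} (hc : c.Injective) :
    MeasurePreserving (fun (Q : ι → α) k => Q (c k))
      (Measure.pi fun _ => μ) (Measure.pi fun _ => μ) := by
  refine ⟨by fun_prop, ?_⟩
  have hind := (ProbabilityTheory.iIndepFun_pi (μ := fun _ : ι => μ) (X := fun _ (x : α) => x)
    (fun _ => aemeasurable_id)).precomp hc
  rw [(ProbabilityTheory.iIndepFun_iff_map_fun_eq_pi_map
    (fun k => (measurable_pi_apply (c k)).aemeasurable)).1 hind]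
  congr with k : 1
  exact (measurePreserving_eval (fun _ : ι => μ) (c k)).map_eq

theorem integral_pi_comp_of_injective {c : κ → ι} (hc : c.Injective) (φ : (κ → α) → ℝ)
    (hφ : AEStronglyMeasurable φ (Measure.pi fun _ => μ)) :
    ∫ Q, φ (fun k => Q (c k)) ∂(Measure.pi fun _ : ι => μ) = ∫ v, φ v ∂(Measure.pi fun _ => μ) := by
  have h := measurePreserving_pi_comp_of_injective (μ := μ) hc
  rw [← h.map_eq] at hφ ⊢
  exact (integral_map h.measurable.aemeasurable hφ).symm

end Marginal

section QMeasure
variable {m M : ℕ} (p : Fin (m + 1) × Fin M → ℝ)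

instance : IsFiniteMeasure (qMeasure p) := ⟨by simp [qMeasure]⟩

theorem qMeasure_singleton (x : Fin (m + 1) × Fin M) : qMeasure p {x} = ENNReal.ofReal (p x) := by
  simp [qMeasure, Measure.dirac_apply' _ (measurableSet_singleton x), Set.indicator_apply]

theorem isProbabilityMeasure_qMeasure (hp0 : ∀ ij, 0 ≤ p ij) (hp1 : ∑ ij, p ij = 1) :
    IsProbabilityMeasure (qMeasure p) := by
  constructor
  simp [qMeasure, ← ENNReal.ofReal_sum_of_nonneg fun i _ => hp0 i, hp1]

theorem integral_pi_qMeasure {ι : Type*} [Fintype ι] [DecidableEq ι] (hp0 : ∀ ij, 0 ≤ p ij)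
    (f : (ι → Fin (m + 1) × Fin M) → ℝ) :
    ∫ Q, f Q ∂(Measure.pi fun _ : ι => qMeasure p) = ∑ Q, (∏ i, p (Q i)) * f Q := by
  rw [integral_fintype Integrable.of_finite]
  refine sum_congr rfl fun Q _ => ?_
  rw [measureReal_def, ← Set.univ_pi_singleton Q, Measure.pi_pi]
  simp only [qMeasure_singleton]
  rw [← ENNReal.ofReal_prod_of_nonneg fun i _ => hp0 (Q i),
    ENNReal.toReal_ofReal (prod_nonneg fun i _ => hp0 (Q i)), smul_eq_mul]

end QMeasure

section DivCoeffSum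
variable (M : ℕ)

theorem hasFiniteSupport_coeff_zero (g : AddMonoidAlgebra ℝ (ℤ × ℤ)) :
    Function.HasFiniteSupport fun b : ℤ => g.coeff (0, b) :=
  Function.support_along_fiber_finite_of_finite _ 0 g.coeff.hasFiniteSupport

theorem divCoeffSum_add (g h : AddMonoidAlgebra ℝ (ℤ × ℤ)) :
    divCoeffSum M (g + h) = divCoeffSum M g + divCoeffSum M h := by
  simp only [divCoeffSum, AddMonoidAlgebra.coeff_add, Finsupp.add_apply]
  exact finsum_mem_add_distrib' ((hasFiniteSupport_coeff_zero g).inter_of_right _)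
    ((hasFiniteSupport_coeff_zero h).inter_of_right _)

theorem divCoeffSum_sum {ι : Type*} (s : Finset ι) (g : ι → AddMonoidAlgebra ℝ (ℤ × ℤ)) :
    divCoeffSum M (∑ i ∈ s, g i) = ∑ i ∈ s, divCoeffSum M (g i) :=
  map_sum (AddMonoidHom.mk' (divCoeffSum M) (divCoeffSum_add M)) g s

theorem divCoeffSum_single (e : ℤ × ℤ) (r : ℝ) :
    divCoeffSum M (AddMonoidAlgebra.single e r) = if e.1 = 0 ∧ (M : ℤ) ∣ e.2 then r else 0 := by
  obtain ⟨a, b⟩ := e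
  rw [divCoeffSum, finsum_eq_single _ b]
  · by_cases ha : a = 0 <;> by_cases hb : (M : ℤ) ∣ b <;>
      simp [finsum_eq_if, AddMonoidAlgebra.coeff_single, ha, hb]
  · intro b' hb'
    simp [AddMonoidAlgebra.coeff_single, Ne.symm hb']

end DivCoeffSum

section CouplingPolynomial
variable {m M : ℕ} (p : Fin (m + 1) × Fin M → ℝ)

def cellExponent (ij : Fin (m + 1) × Fin M) : ℤ × ℤ := ((ij.1 : ℤ), (ij.2 : ℤ))

theorem prod_fpa {κ : Type*} [Fintype κ] [DecidableEq κ] (s : κ → ℤ) :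
    ∏ k, fpa p (s k) = ∑ v : κ → Fin (m + 1) × Fin M,
      AddMonoidAlgebra.single (∑ k, s k • cellExponent (v k)) (∏ k, p (v k)) := by
  change ∏ k, ∑ ij, AddMonoidAlgebra.single (s k • cellExponent ij) (p ij) = _
  rw [prod_univ_sum, Fintype.piFinset_univ]
  simp only [AddMonoidAlgebra.prod_single]

def cycleSigns : Fin 6 → ℤ := ![1, 1, 1, -1, -1, -1]

def cyclePoint (v : Fin 6 → Fin (m + 1) × Fin M) : ℤ × ℤ := ∑ k, cycleSigns k • cellExponent (v k)

theorem fpa_cube_mul_fpa_neg_cube : fpa p 1 ^ 3 * fpa p (-1) ^ 3 =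
    ∑ v, AddMonoidAlgebra.single (cyclePoint v) (∏ k, p (v k)) := by
  unfold cyclePoint
  rw [← prod_fpa]
  simp only [cycleSigns, Fin.prod_univ_six, Matrix.cons_val_zero, Matrix.cons_val_one,
    Matrix.cons_val]
  ring

theorem divCoeffSum_fpa_cube_mul_fpa_neg_cube :
    divCoeffSum M (fpa p 1 ^ 3 * fpa p (-1) ^ 3) = ∑ v,
      if (cyclePoint v).1 = 0 ∧ (M : ℤ) ∣ (cyclePoint v).2 then ∏ k, p (v k) else 0 := by
  simp only [fpa_cube_mul_fpa_neg_cube, divCoeffSum_sum, divCoeffSum_single]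

end CouplingPolynomial

def cycleCells {α β : Type*} (i₁ i₂ i₃ : α) (j₁ j₂ j₃ : β) : Fin 6 → α × β :=
  ![(i₁, j₁), (i₂, j₂), (i₃, j₃), (i₁, j₂), (i₂, j₃), (i₃, j₁)]

theorem cycleCells_injective {α β : Type*} {i₁ i₂ i₃ : α} {j₁ j₂ j₃ : β}
    (hi : i₁ ≠ i₂ ∧ i₁ ≠ i₃ ∧ i₂ ≠ i₃) (hj : j₁ ≠ j₂ ∧ j₁ ≠ j₃ ∧ j₂ ≠ j₃) :
    (cycleCells i₁ i₂ i₃ j₁ j₂ j₃).Injective := by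
  intro a b hab
  fin_cases a <;> fin_cases b <;> simp_all [cycleCells]

theorem cyclePoint_cycleCells {m M γ κ : ℕ} (Q : Fin γ × Fin κ → Fin (m + 1) × Fin M)
    (i₁ i₂ i₃ : Fin γ) (j₁ j₂ j₃ : Fin κ) :
    cyclePoint (fun k => Q (cycleCells i₁ i₂ i₃ j₁ j₂ j₃ k)) =
      ((((Q (i₁, j₁)).1 : ℤ) - ((Q (i₁, j₂)).1 : ℤ)) +
         (((Q (i₂, j₂)).1 : ℤ) - ((Q (i₂, j₃)).1 : ℤ)) +
         (((Q (i₃, j₃)).1 : ℤ) - ((Q (i₃, j₁)).1 : ℤ)),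
       (((Q (i₁, j₁)).2 : ℤ) - ((Q (i₁, j₂)).2 : ℤ)) +
         (((Q (i₂, j₂)).2 : ℤ) - ((Q (i₂, j₃)).2 : ℤ)) +
         (((Q (i₃, j₃)).2 : ℤ) - ((Q (i₃, j₁)).2 : ℤ))) := by
  simp only [cyclePoint, cycleCells, cycleSigns, cellExponent, Fin.sum_univ_six,
    Matrix.cons_val_zero, Matrix.cons_val_one, Matrix.cons_val, one_smul, neg_smul,
    Prod.mk_add_mk, Prod.neg_mk]
  ext <;> ring

theorem activeCount_eq_sum_cyclePoint {m M γ κ : ℕ} (Q : Fin γ × Fin κ → Fin (m + 1) × Fin M) :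
    activeCount m M γ κ Q =
      ∑ i₁ : Fin γ, ∑ i₂ : Fin γ, ∑ i₃ : Fin γ, ∑ j₁ : Fin κ, ∑ j₂ : Fin κ, ∑ j₃ : Fin κ,
        if i₁ ≠ i₂ ∧ i₁ ≠ i₃ ∧ i₂ ≠ i₃ ∧ j₁ ≠ j₂ ∧ j₁ ≠ j₃ ∧ j₂ ≠ j₃ ∧
          (cyclePoint (fun k => Q (cycleCells i₁ i₂ i₃ j₁ j₂ j₃ k))).1 = 0 ∧
          (M : ℤ) ∣ (cyclePoint (fun k => Q (cycleCells i₁ i₂ i₃ j₁ j₂ j₃ k))).2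
        then (1 : ℝ) else 0 := by
  simp only [activeCount, cyclePoint_cycleCells]

theorem integral_cyclePoint_indicator {m M : ℕ} (p : Fin (m + 1) × Fin M → ℝ)
    (hp0 : ∀ ij, 0 ≤ p ij) :
    ∫ v, (if (cyclePoint v).1 = 0 ∧ (M : ℤ) ∣ (cyclePoint v).2 then (1 : ℝ) else 0)
        ∂(Measure.pi fun _ : Fin 6 => qMeasure p) =
      divCoeffSum M (fpa p 1 ^ 3 * fpa p (-1) ^ 3) := by
  simp only [integral_pi_qMeasure p hp0, mul_boole, divCoeffSum_fpa_cube_mul_fpa_neg_cube]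

theorem integral_cycle_indicator {m M γ κ : ℕ} (p : Fin (m + 1) × Fin M → ℝ)
    (hp0 : ∀ ij, 0 ≤ p ij) (hp1 : ∑ ij, p ij = 1) (i₁ i₂ i₃ : Fin γ) (j₁ j₂ j₃ : Fin κ) :
    ∫ Q, (if i₁ ≠ i₂ ∧ i₁ ≠ i₃ ∧ i₂ ≠ i₃ ∧ j₁ ≠ j₂ ∧ j₁ ≠ j₃ ∧ j₂ ≠ j₃ ∧
          (cyclePoint (fun k => Q (cycleCells i₁ i₂ i₃ j₁ j₂ j₃ k))).1 = 0 ∧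
          (M : ℤ) ∣ (cyclePoint (fun k => Q (cycleCells i₁ i₂ i₃ j₁ j₂ j₃ k))).2
        then (1 : ℝ) else 0) ∂(Measure.pi fun _ : Fin γ × Fin κ => qMeasure p) =
      (if i₁ ≠ i₂ ∧ i₁ ≠ i₃ ∧ i₂ ≠ i₃ then 1 else 0) *
        ((if j₁ ≠ j₂ ∧ j₁ ≠ j₃ ∧ j₂ ≠ j₃ then 1 else 0) *
          divCoeffSum M (fpa p 1 ^ 3 * fpa p (-1) ^ 3)) := by
  have := isProbabilityMeasure_qMeasure p hp0 hp1
  by_cases hi : i₁ ≠ i₂ ∧ i₁ ≠ i₃ ∧ i₂ ≠ i₃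
  · by_cases hj : j₁ ≠ j₂ ∧ j₁ ≠ j₃ ∧ j₂ ≠ j₃
    · simp only [hi, hj, true_and, if_true, one_mul, ne_eq, not_false_eq_true]
      rw [integral_pi_comp_of_injective (cycleCells_injective hi hj)
        (fun v => if (cyclePoint v).1 = 0 ∧ (M : ℤ) ∣ (cyclePoint v).2 then (1 : ℝ) else 0)
        (Measurable.of_discrete).aestronglyMeasurable]
      exact integral_cyclePoint_indicator p hp0
    · rw [if_neg hj, zero_mul, mul_zero]
      exact integral_eq_zero_of_ae (.of_forall fun Q =>
        if_neg fun h => hj ⟨h.2.2.2.1, h.2.2.2.2.1, h.2.2.2.2.2.1⟩)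
  · rw [if_neg hi, zero_mul]
    exact integral_eq_zero_of_ae (.of_forall fun Q =>
      if_neg fun h => hi ⟨h.1, h.2.1, h.2.2.1⟩)

theorem stmt1_general {m M γ κ : ℕ}
    (p : Fin (m + 1) × Fin M → ℝ) (hp0 : ∀ ij, 0 ≤ p ij)
    (hp1 : ∑ ij : Fin (m + 1) × Fin M, p ij = 1) :
    ∫ Q : Fin γ × Fin κ → Fin (m + 1) × Fin M, activeCount m M γ κ Q
        ∂(Measure.pi fun _ : Fin γ × Fin κ => qMeasure p) =
      (γ : ℝ) * ((γ : ℝ) - 1) * ((γ : ℝ) - 2) *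
        ((κ : ℝ) * ((κ : ℝ) - 1) * ((κ : ℝ) - 2)) *
        divCoeffSum M ((fpa p 1) ^ 3 * (fpa p (-1)) ^ 3) := by
  simp only [activeCount_eq_sum_cyclePoint, integral_finsetSum _ fun _ _ => Integrable.of_finite,
    integral_cycle_indicator p hp0 hp1, ← mul_sum, ← sum_mul]
  rw [sum_boole_pairwise_ne, sum_boole_pairwise_ne, Fintype.card_fin, Fintype.card_fin]
  ring

/-- when the entries of `Q` are i.i.d. with law `q(i,j) = p(i,j)`, the
expected number of active ordered tuples is
`γ(γ−1)(γ−2)·κ(κ−1)(κ−2)·Σ_{M ∣ b} [f³·f̄³]_{(0,b)}`. -/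
theorem stmt1 {m M γ κ : ℕ} (hm : 1 ≤ m) (hM : 2 ≤ M) (hγ : 3 ≤ γ) (hκ : 3 ≤ κ)
    (p : Fin (m + 1) × Fin M → ℝ) (hp0 : ∀ ij, 0 ≤ p ij)
    (hp1 : ∑ ij : Fin (m + 1) × Fin M, p ij = 1) :
    ∫ Q : Fin γ × Fin κ → Fin (m + 1) × Fin M, activeCount m M γ κ Q
        ∂(Measure.pi fun _ : Fin γ × Fin κ => qMeasure p) =
      (γ : ℝ) * ((γ : ℝ) - 1) * ((γ : ℝ) - 2) *
        ((κ : ℝ) * ((κ : ℝ) - 1) * ((κ : ℝ) - 2)) *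
        divCoeffSum M ((fpa p 1) ^ 3 * (fpa p (-1)) ^ 3) :=
  stmt1_general p hp0 hp1
end

section
/- Fix integers m ≥ 1 and M ≥ 2, define P₆ : ((Fin (m+1) × Fin M) → ℝ) → ℝ by P₆(p) = Σ_{b ∈ ℤ, M ∣ b} [f_p³ · f̄_p³]_{(0,b)}, let p* : Fin (m+1) → ℝ, and let S = { q : (Fin (m+1) × Fin M) → ℝ | for every i, Σ_{j=0}^{M−1} q(i,j) = p*(i) } be the affine constraint set. If p ∈ S is a local minimum of P₆ on S, then there exists c : Fin (m+1) → ℝ such that for all i ∈ {0,…,m} and j ∈ {0,…,M−1}, Σ_{b ∈ ℤ, M ∣ b} [f_p³ · f̄_p²]_{(i, b+j)} = c(i), where j is cast to ℤ. (Lemma 1: necessary first-order conditions for a local minimizer of the expected cycle-6 count.) -/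
/-- `P₆(p) = Σ_{b ∈ ℤ, M ∣ b} [f_p³ · f̄_p³]_{(0,b)}`. -/
noncomputable def P6 (m M : ℕ) (p : Fin (m + 1) × Fin M → ℝ) : ℝ :=
  ∑ᶠ (b : ℤ) (_ : (M : ℤ) ∣ b), ((fpa p 1) ^ 3 * (fpa p (-1)) ^ 3).coeff (0, b)


/-! Moving mass from `(i, j')` to `(i, j)` keeps `p` in `S`, so along the line
`p + t v`, `v = e_{ij} - e_{ij'}`, the polynomial `t ↦ P₆` has a local minimum at `t = 0` and
hence a vanishing derivative there. With `g = f_v`, `ḡ = f̄_v` and the linear functional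
`Φ = latticeSum M`, this derivative is `3 Φ(f² g f̄³) + 3 Φ(f³ f̄² ḡ)`, and the two terms agree because `Φ` is invariant under
`(X, Y) ↦ (X⁻¹, Y⁻¹)`, which swaps `f ↔ f̄` and `g ↔ ḡ`. So `Φ(f³ f̄² ḡ) = 0`, and since
`ḡ = X⁻ⁱ (Y⁻ʲ - Y⁻ʲ')`, this says that the coefficient sums of the statement agree at `j` and `j'`. -/

open AddMonoidAlgebra Polynomial

section LatticeSum

variable {R : Type*} [CommSemiring R]

lemma finite_support_coeff_zero_mk (g : AddMonoidAlgebra R (ℤ × ℤ)) :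
    (Function.support fun b : ℤ => g.coeff (0, b)).Finite :=
  g.coeff.hasFiniteSupport.preimage (Prod.mk_right_injective 0).injOn

variable (R) in
noncomputable def latticeSum (M : ℤ) : AddMonoidAlgebra R (ℤ × ℤ) →ₗ[R] R where
  toFun g := ∑ᶠ (b : ℤ) (_ : M ∣ b), g.coeff (0, b)
  map_add' g h := finsum_mem_add_distrib' (s := {b | M ∣ b})
    ((finite_support_coeff_zero_mk g).inter_of_right _)
    ((finite_support_coeff_zero_mk h).inter_of_right _)
  map_smul' r g :=
    ((AddMonoidHom.mulLeft r).map_finsum_mem' (s := {b | M ∣ b})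
      ((finite_support_coeff_zero_mk g).inter_of_right _)).symm

lemma latticeSum_apply (M : ℤ) (g : AddMonoidAlgebra R (ℤ × ℤ)) :
    latticeSum R M g = ∑ᶠ (b : ℤ) (_ : M ∣ b), g.coeff (0, b) := rfl

lemma latticeSum_domCongr_neg (M : ℤ) (g : AddMonoidAlgebra R (ℤ × ℤ)) :
    latticeSum R M (domCongr R R (AddEquiv.neg (ℤ × ℤ)) g) = latticeSum R M g := by
  simp only [latticeSum_apply, coeff_domCongr]
  rw [← finsum_comp_equiv (Equiv.neg ℤ)]
  simp [dvd_neg]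

lemma latticeSum_mul_single (M a c : ℤ) (g : AddMonoidAlgebra R (ℤ × ℤ)) :
    latticeSum R M (g * single (-a, -c) 1) = ∑ᶠ (b : ℤ) (_ : M ∣ b), g.coeff (a, b + c) := by
  simp [latticeSum_apply]

end LatticeSum

theorem hasDerivAt_linearMap_eval {𝕜 A : Type*} [NontriviallyNormedField 𝕜] [Semiring A]
    [Algebra 𝕜 A] (L : A →ₗ[𝕜] 𝕜) (Q : A[X]) (t : 𝕜) :
    HasDerivAt (fun s => L (Q.eval (algebraMap 𝕜 A s)))
      (L ((derivative Q).eval (algebraMap 𝕜 A t))) t := by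
  induction Q using Polynomial.induction_on' with
  | add P Q hP hQ => simpa only [eval_add, map_add, derivative_add] using hP.fun_add hQ
  | monomial n a =>
    have hL : ∀ (k : ℕ) (s : 𝕜), L (a * algebraMap 𝕜 A s ^ k) = s ^ k * L a := fun k s => by
      rw [← map_pow, ← Algebra.commutes, ← Algebra.smul_def, map_smul, smul_eq_mul]
    simp only [eval_monomial, derivative_monomial, mul_assoc, ← Nat.cast_comm, hL]
    rw [← nsmul_eq_mul, map_nsmul, hL, nsmul_eq_mul, ← mul_assoc]
    exact (hasDerivAt_pow n t).mul_const (L a)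

noncomputable def fpaLinearMap (m M : ℕ) (a : ℤ) :
    (Fin (m + 1) × Fin M → ℝ) →ₗ[ℝ] AddMonoidAlgebra ℝ (ℤ × ℤ) where
  toFun p := fpa p a
  map_add' p q := by simp only [fpa, Pi.add_apply, single_add, Finset.sum_add_distrib]
  map_smul' r p := by
    simp only [fpa, Finset.smul_sum, smul_single, Pi.smul_apply, RingHom.id_apply]

section Fpa

variable {m M : ℕ}

lemma fpa_sub (p q : Fin (m + 1) × Fin M → ℝ) (a : ℤ) :
    fpa (p - q) a = fpa p a - fpa q a :=
  map_sub (fpaLinearMap m M a) p q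

lemma fpa_single (x : Fin (m + 1) × Fin M) (a : ℤ) :
    fpa (Pi.single x 1) a = single (a * x.1, a * x.2) 1 := by
  rw [fpa, Finset.sum_eq_single x (fun y _ hy => by simp [hy]) (by simp)]
  simp

lemma domCongr_neg_fpa (p : Fin (m + 1) × Fin M → ℝ) (a : ℤ) :
    domCongr ℝ ℝ (AddEquiv.neg (ℤ × ℤ)) (fpa p a) = fpa p (-a) := by
  simp [fpa]

lemma fpa_add_smul (p v : Fin (m + 1) × Fin M → ℝ) (t : ℝ) (a : ℤ) :
    fpa (p + t • v) a = fpa p a + t • fpa v a := by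
  change fpaLinearMap m M a (p + t • v) = _
  rw [map_add, map_smul]
  rfl

lemma P6_eq_latticeSum (p : Fin (m + 1) × Fin M → ℝ) :
    P6 m M p = latticeSum ℝ M (fpa p 1 ^ 3 * fpa p (-1) ^ 3) := rfl

theorem latticeSum_fpa_mul_eq_zero_of_isLocalMinOn {S : Set (Fin (m + 1) × Fin M → ℝ)}
    {p v : Fin (m + 1) × Fin M → ℝ} (hmin : IsLocalMinOn (P6 m M) S p)
    (hline : ∀ t : ℝ, p + t • v ∈ S) :
    latticeSum ℝ M (fpa p 1 ^ 3 * fpa p (-1) ^ 2 * fpa v (-1)) = 0 := by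
  let Q : (AddMonoidAlgebra ℝ (ℤ × ℤ))[X] :=
    (C (fpa p 1) + X * C (fpa v 1)) ^ 3 * (C (fpa p (-1)) + X * C (fpa v (-1))) ^ 3
  have hcurve : (fun t : ℝ => P6 m M (p + t • v))
      = fun t => latticeSum ℝ M (Q.eval (algebraMap ℝ _ t)) := by
    funext t
    rw [P6_eq_latticeSum, fpa_add_smul, fpa_add_smul]
    simp only [Q, eval_mul, eval_pow, eval_add, eval_C, eval_X, Algebra.smul_def]
  have hloc : IsLocalMin (fun t : ℝ => P6 m M (p + t • v)) 0 := by
    replace hmin : IsLocalMinOn (P6 m M) S (p + (0 : ℝ) • v) := by simpa using hmin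
    have := hmin.comp_continuousOn (s := Set.univ) (g := fun t : ℝ => p + t • v)
      (fun t _ => hline t) (by fun_prop) (Set.mem_univ 0)
    simpa [isLocalMinOn_univ_iff, Function.comp_def] using this
  have hderiv := hasDerivAt_linearMap_eval (latticeSum ℝ M) Q 0
  rw [← hcurve] at hderiv
  have h0 := hloc.hasDerivAt_eq_zero hderiv
  have hQ' : (derivative Q).eval (algebraMap ℝ _ 0) =
      3 • (fpa p 1 ^ 2 * fpa v 1 * fpa p (-1) ^ 3) +
        3 • (fpa p 1 ^ 3 * fpa p (-1) ^ 2 * fpa v (-1)) := by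
    simp only [Q, map_zero, derivative_mul, derivative_pow, derivative_add, derivative_C,
      derivative_X, eval_add, eval_mul, eval_pow, eval_C, eval_X, eval_one, eval_zero, nsmul_eq_mul]
    ring
  have hsymm : latticeSum ℝ M (fpa p 1 ^ 2 * fpa v 1 * fpa p (-1) ^ 3)
      = latticeSum ℝ M (fpa p 1 ^ 3 * fpa p (-1) ^ 2 * fpa v (-1)) := by
    rw [← latticeSum_domCongr_neg]
    simp only [map_mul, map_pow, domCongr_neg_fpa, neg_neg]
    ring_nf
  rw [hQ', map_add, map_nsmul, map_nsmul, hsymm, nsmul_eq_mul, Nat.cast_ofNat] at h0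
  linarith

end Fpa

lemma sum_single_sub_single_apply {ι κ : Type*} [DecidableEq ι] [DecidableEq κ] [Fintype κ]
    {G : Type*} [AddCommGroup G] (i i' : ι) (j j' : κ) (r : G) :
    ∑ k, (Pi.single (i, j) r - Pi.single (i, j') r : ι × κ → G) (i', k) = 0 := by
  simp [Pi.single_apply, Prod.ext_iff, Finset.sum_sub_distrib, ite_and]

theorem coeffSum_eq_of_isLocalMinOn {m M : ℕ} {pstar : Fin (m + 1) → ℝ}
    {p : Fin (m + 1) × Fin M → ℝ} (hpS : ∀ i, ∑ j, p (i, j) = pstar i)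
    (hmin : IsLocalMinOn (P6 m M) {q | ∀ i, ∑ j, q (i, j) = pstar i} p)
    (i : Fin (m + 1)) (j j' : Fin M) :
    ∑ᶠ (b : ℤ) (_ : (M : ℤ) ∣ b), (fpa p 1 ^ 3 * fpa p (-1) ^ 2).coeff (i, b + j)
      = ∑ᶠ (b : ℤ) (_ : (M : ℤ) ∣ b), (fpa p 1 ^ 3 * fpa p (-1) ^ 2).coeff (i, b + j') := by
  set v : Fin (m + 1) × Fin M → ℝ := Pi.single (i, j) 1 - Pi.single (i, j') 1
  have hline (t : ℝ) : p + t • v ∈ {q | ∀ i, ∑ j, q (i, j) = pstar i} := fun i' => by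
    simp only [Pi.add_apply, Pi.smul_apply, smul_eq_mul, Finset.sum_add_distrib, ← Finset.mul_sum,
      hpS, v, sum_single_sub_single_apply, mul_zero, add_zero]
  have h := latticeSum_fpa_mul_eq_zero_of_isLocalMinOn hmin hline
  simp only [v, fpa_sub, fpa_single, neg_one_mul, mul_sub, map_sub, latticeSum_mul_single] at h
  exact sub_eq_zero.mp h

theorem stmt10_general {m M : ℕ}
    (pstar : Fin (m + 1) → ℝ)
    (S : Set ((Fin (m + 1) × Fin M) → ℝ))
    (hS : S = {q | ∀ i : Fin (m + 1), ∑ j : Fin M, q (i, j) = pstar i})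
    (p : Fin (m + 1) × Fin M → ℝ) (hpS : p ∈ S)
    (hmin : IsLocalMinOn (P6 m M) S p) :
    ∃ c : Fin (m + 1) → ℝ, ∀ (i : Fin (m + 1)) (j : Fin M),
      (∑ᶠ (b : ℤ) (_ : (M : ℤ) ∣ b),
        ((fpa p 1) ^ 3 * (fpa p (-1)) ^ 2).coeff ((i : ℤ), b + (j : ℤ))) = c i := by
  subst hS
  rcases isEmpty_or_nonempty (Fin M) with _ | ⟨⟨j₀⟩⟩
  · exact ⟨0, fun _ j => isEmptyElim j⟩
  · exact ⟨_, fun i j => coeffSum_eq_of_isLocalMinOn hpS hmin i j j₀⟩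

/-- Lemma 1: first-order necessary conditions at a local minimum of `P₆`
on the affine constraint set `S = {q | ∀ i, Σ_j q(i,j) = p*(i)}`. -/
theorem stmt10 {m M : ℕ} (hm : 1 ≤ m) (hM : 2 ≤ M)
    (pstar : Fin (m + 1) → ℝ)
    (S : Set ((Fin (m + 1) × Fin M) → ℝ))
    (hS : S = {q | ∀ i : Fin (m + 1), ∑ j : Fin M, q (i, j) = pstar i})
    (p : Fin (m + 1) × Fin M → ℝ) (hpS : p ∈ S)
    (hmin : IsLocalMinOn (P6 m M) S p) :
    ∃ c : Fin (m + 1) → ℝ, ∀ (i : Fin (m + 1)) (j : Fin M),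
      (∑ᶠ (b : ℤ) (_ : (M : ℤ) ∣ b),
        ((fpa p 1) ^ 3 * (fpa p (-1)) ^ 2).coeff ((i : ℤ), b + (j : ℤ))) = c i :=
  stmt10_general pstar S hS p hpS hmin
end
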